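/- arXiv:math/0608170 — 3 statements merged into one kernel-verified Lean document; each statement's English description precedes it below -/
import Mathlib

section
/- Let C be an A-coring with group-like element g and let (M, ρ) be a right C-comodule. Then the map ∇ : M → M ⊗_A ker ε defined by ∇(m) = ρ(m) − m ⊗ g lands in M ⊗_A ker ε and satisfies the connection (Leibniz) rule ∇(m·a) = ∇(m)·a + m ⊗ d(a), where d(a) = g·a − a·g. -/
open TensorProduct MulOpposite LinearMap

variable (k A C : Type) [CommRing k] [Ring A] [Algebra k A]
  [AddCommGroup C] [Module k C] [Module A C] [Module Aᵐᵒᵖ C]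
  [IsScalarTower k A C] [IsScalarTower k Aᵐᵒᵖ C]
  [SMulCommClass A Aᵐᵒᵖ C] [SMulCommClass A k C] [SMulCommClass Aᵐᵒᵖ k C]

/-- The left `A`-action on the `A`-bimodule `C` as a `k`-bilinear map. -/
noncomputable def lAct : A →ₗ[k] C →ₗ[k] C :=
  LinearMap.mk₂ k (fun a c => a • c)
    (fun a b c => add_smul a b c)
    (fun t a c => smul_assoc t a c)
    (fun a c c' => smul_add a c c')
    (fun t a c => smul_comm a t c)

/-- The right `A`-action on the `A`-bimodule `C` as a `k`-bilinear map. -/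
noncomputable def rAct : A →ₗ[k] C →ₗ[k] C :=
  LinearMap.mk₂ k (fun a c => op a • c)
    (fun a b c => by simp [op_add, add_smul])
    (fun t a c => by simp [op_smul, smul_assoc])
    (fun a c c' => smul_add _ c c')
    (fun t a c => smul_comm _ t c)

/-- The kernel of the canonical map `C ⊗[k] C → C ⊗[A] C`; equalities in `C ⊗_A C`
are equalities modulo `corel`. -/
noncomputable def corel : Submodule k (C ⊗[k] C) :=
  Submodule.span k {x | ∃ (c c' : C) (a : A), x = (op a • c) ⊗ₜ[k] c' - c ⊗ₜ[k] (a • c')}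

/-- The relations defining `C ⊗_A C ⊗_A C` as a quotient of `C ⊗[k] (C ⊗[k] C)`. -/
noncomputable def corel3 : Submodule k (C ⊗[k] (C ⊗[k] C)) :=
  Submodule.span k
    ({x | ∃ (c₁ c₂ c₃ : C) (a : A),
        x = (op a • c₁) ⊗ₜ[k] (c₂ ⊗ₜ[k] c₃) - c₁ ⊗ₜ[k] ((a • c₂) ⊗ₜ[k] c₃)} ∪
     {x | ∃ (c₁ c₂ c₃ : C) (a : A),
        x = c₁ ⊗ₜ[k] ((op a • c₂) ⊗ₜ[k] c₃) - c₁ ⊗ₜ[k] (c₂ ⊗ₜ[k] (a • c₃))})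

/-- `ε ⊗_A id` followed by `A ⊗_A C ≅ C`: the map `C ⊗[k] C → C`, `x ⊗ y ↦ ε(x) • y`. -/
noncomputable def epsL (ε : C →ₗ[k] A) : C ⊗[k] C →ₗ[k] C :=
  TensorProduct.lift ((lAct k A C) ∘ₗ ε)

/-- `id ⊗_A ε` followed by `C ⊗_A A ≅ C`: the map `C ⊗[k] C → C`, `x ⊗ y ↦ x • ε(y)`. -/
noncomputable def epsR (ε : C →ₗ[k] A) : C ⊗[k] C →ₗ[k] C :=
  TensorProduct.lift (((rAct k A C) ∘ₗ ε).flip)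


variable (M : Type) [AddCommGroup M] [Module k M] [Module Aᵐᵒᵖ M]
  [IsScalarTower k Aᵐᵒᵖ M] [SMulCommClass Aᵐᵒᵖ k M] [SMulCommClass k Aᵐᵒᵖ M]

/-- The right `A`-action on the right `A`-module `M` as a `k`-bilinear map. -/
noncomputable def rActM : A →ₗ[k] M →ₗ[k] M :=
  LinearMap.mk₂ k (fun a m => op a • m)
    (fun a b m => by simp [op_add, add_smul])
    (fun t a m => by simp [op_smul, smul_assoc])
    (fun a m m' => smul_add _ m m')
    (fun t a m => smul_comm _ t m)

/-- The relations defining `M ⊗_A C` as a quotient of `M ⊗[k] C`. -/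
noncomputable def relM : Submodule k (M ⊗[k] C) :=
  Submodule.span k {x | ∃ (m : M) (c : C) (a : A), x = (op a • m) ⊗ₜ[k] c - m ⊗ₜ[k] (a • c)}

/-- The relations defining `M ⊗_A C ⊗_A C` as a quotient of `M ⊗[k] (C ⊗[k] C)`. -/
noncomputable def relM2 : Submodule k (M ⊗[k] (C ⊗[k] C)) :=
  Submodule.span k
    ({x | ∃ (m : M) (c₂ c₃ : C) (a : A),
        x = (op a • m) ⊗ₜ[k] (c₂ ⊗ₜ[k] c₃) - m ⊗ₜ[k] ((a • c₂) ⊗ₜ[k] c₃)} ∪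
     {x | ∃ (m : M) (c₂ c₃ : C) (a : A),
        x = m ⊗ₜ[k] ((op a • c₂) ⊗ₜ[k] c₃) - m ⊗ₜ[k] (c₂ ⊗ₜ[k] (a • c₃))})

/-- `id_M ⊗_A ε` followed by `M ⊗_A A ≅ M`: the map `M ⊗[k] C → M`, `m ⊗ c ↦ m • ε(c)`. -/
noncomputable def epsRM (ε : C →ₗ[k] A) : M ⊗[k] C →ₗ[k] M :=
  TensorProduct.lift (((rActM k A M) ∘ₗ ε).flip)

/-- **Comodules give flat connections.** Let `C` be an `A`-coring with a group-like
element `g` and `(M, ρ)` a right `C`-comodule (coaction with values in `M ⊗_A C`, i.e.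
in `M ⊗[k] C` modulo `relM`; right `A`-linear, coassociative and counital). Then
`∇(m) = ρ(m) − m ⊗ g` lands in `M ⊗_A ker ε` (the image of `M ⊗ ker ε` in `M ⊗_A C`)
and satisfies the connection rule `∇(m·a) = ∇(m)·a + m ⊗ d(a)` with `d(a) = g·a − a·g`. -/
theorem comodule_to_connection
    (Δ : C →ₗ[k] C ⊗[k] C) (ε : C →ₗ[k] A) (g : C)
    (hεl : ∀ (a : A) (c : C), ε (a • c) = a * ε c)
    (hεr : ∀ (a : A) (c : C), ε (op a • c) = ε c * a)
    (hΔl : ∀ (a : A) (c : C), Δ (a • c) - rTensor C (lAct k A C a) (Δ c) ∈ corel k A C)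
    (hΔr : ∀ (a : A) (c : C), Δ (op a • c) - lTensor C (rAct k A C a) (Δ c) ∈ corel k A C)
    (hcoassoc : ∀ c : C,
      (TensorProduct.assoc k C C C) (rTensor C Δ (Δ c)) - lTensor C Δ (Δ c) ∈ corel3 k A C)
    (hcounitl : ∀ c : C, epsL k A C ε (Δ c) = c)
    (hcounitr : ∀ c : C, epsR k A C ε (Δ c) = c)
    (hg1 : Δ g - g ⊗ₜ[k] g ∈ corel k A C) (hg2 : ε g = 1)
    (ρ : M →ₗ[k] M ⊗[k] C)
    (hρlin : ∀ (a : A) (m : M),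
      ρ (op a • m) - lTensor M (rAct k A C a) (ρ m) ∈ relM k A C M)
    (hρcoassoc : ∀ m : M,
      (TensorProduct.assoc k M C C) (rTensor C ρ (ρ m)) - lTensor M Δ (ρ m) ∈ relM2 k A C M)
    (hρcounit : ∀ m : M, epsRM k A C M ε (ρ m) = m) :
    (∀ m : M, ρ m - m ⊗ₜ[k] g ∈
      LinearMap.range (lTensor M (LinearMap.ker ε).subtype) ⊔ relM k A C M) ∧
    (∀ (m : M) (a : A),
      (ρ (op a • m) - (op a • m) ⊗ₜ[k] g) -
        (lTensor M (rAct k A C a) (ρ m - m ⊗ₜ[k] g) + m ⊗ₜ[k] (op a • g - a • g))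
        ∈ relM k A C M) := by
  have key : ∀ x : M ⊗[k] C, x - (epsRM k A C M ε x) ⊗ₜ[k] g ∈
      LinearMap.range (lTensor M (LinearMap.ker ε).subtype) ⊔ relM k A C M := by
    intro x
    induction x using TensorProduct.induction_on with
    | zero => simp
    | tmul m c =>
      have h1 : m ⊗ₜ[k] c - (epsRM k A C M ε (m ⊗ₜ[k] c)) ⊗ₜ[k] g
          = m ⊗ₜ[k] (c - ε c • g) - ((op (ε c) • m) ⊗ₜ[k] g - m ⊗ₜ[k] (ε c • g)) := by
        simp only [epsRM, rActM, TensorProduct.lift.tmul, LinearMap.flip_apply,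
          LinearMap.comp_apply, LinearMap.mk₂_apply, TensorProduct.tmul_sub]
        abel
      rw [h1]
      refine Submodule.sub_mem _ ?_ ?_
      · apply Submodule.mem_sup_left
        refine ⟨m ⊗ₜ[k] ⟨c - ε c • g, ?_⟩, ?_⟩
        · simp [LinearMap.mem_ker, hεl, hg2]
        · simp
      · apply Submodule.mem_sup_right
        exact Submodule.subset_span ⟨m, g, ε c, rfl⟩
    | add x y hx hy =>
      have := Submodule.add_mem _ hx hy
      simpa [map_add, TensorProduct.add_tmul, sub_add_sub_comm] using this
  constructor
  · intro m
    have h := key (ρ m - m ⊗ₜ[k] g)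
    have heps : epsRM k A C M ε (ρ m - m ⊗ₜ[k] g) = 0 := by
      rw [map_sub, hρcounit]
      simp [epsRM, rActM, hg2]
    rwa [heps, TensorProduct.zero_tmul, sub_zero] at h
  · intro m a
    have h1 := hρlin a m
    have hgen : (op a • m) ⊗ₜ[k] g - m ⊗ₜ[k] (a • g) ∈ relM k A C M :=
      Submodule.subset_span ⟨m, g, a, rfl⟩
    have h2 := Submodule.sub_mem _ h1 hgen
    convert h2 using 1
    simp only [map_sub, TensorProduct.tmul_sub, lTensor_tmul, rAct, LinearMap.mk₂_apply]
    abel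
end

section
/- An A-coring C admits a group-like element if and only if A itself is a right C-comodule, i.e., there is a right A-linear map ρ : A → A ⊗_A C ≅ C satisfying coassociativity and counitality. Explicitly, if g is group-like then ρ(a) = g·a defines a right C-comodule structure on A, and conversely if ρ is a right coaction on A then g = ρ(1) is group-like. -/
open TensorProduct MulOpposite LinearMap

variable (k A C : Type) [CommRing k] [Ring A] [Algebra k A]
  [AddCommGroup C] [Module k C] [Module A C] [Module Aᵐᵒᵖ C]
  [IsScalarTower k A C] [IsScalarTower k Aᵐᵒᵖ C]
  [SMulCommClass A Aᵐᵒᵖ C] [SMulCommClass A k C] [SMulCommClass Aᵐᵒᵖ k C]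

/-- **Group-like elements correspond to comodule structures on `A`.** An `A`-coring `C`
(coproduct `Δ` with values in `C ⊗_A C`, i.e. in `C ⊗[k] C` modulo `corel`, counit `ε`)
admits a group-like element iff `A` is a right `C`-comodule, i.e. there is a right
`A`-linear `ρ : A → A ⊗_A C ≅ C` which is coassociative and counital. Explicitly, if
`g` is group-like then `ρ(a) = g·a` is a right coaction, and if `ρ` is a right coaction
then `g = ρ(1)` is group-like. -/
theorem grouplike_iff_comodule
    (Δ : C →ₗ[k] C ⊗[k] C) (ε : C →ₗ[k] A)
    (hεl : ∀ (a : A) (c : C), ε (a • c) = a * ε c)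
    (hεr : ∀ (a : A) (c : C), ε (op a • c) = ε c * a)
    (hΔl : ∀ (a : A) (c : C), Δ (a • c) - rTensor C (lAct k A C a) (Δ c) ∈ corel k A C)
    (hΔr : ∀ (a : A) (c : C), Δ (op a • c) - lTensor C (rAct k A C a) (Δ c) ∈ corel k A C)
    (hcoassoc : ∀ c : C,
      (TensorProduct.assoc k C C C) (rTensor C Δ (Δ c)) - lTensor C Δ (Δ c) ∈ corel3 k A C)
    (hcounitl : ∀ c : C, epsL k A C ε (Δ c) = c)
    (hcounitr : ∀ c : C, epsR k A C ε (Δ c) = c) :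
    ((∃ g : C, Δ g - g ⊗ₜ[k] g ∈ corel k A C ∧ ε g = 1) ↔
      (∃ ρ : A →ₗ[k] C,
        (∀ a b : A, ρ (a * b) = op b • ρ a) ∧
        (∀ a : A, ρ 1 ⊗ₜ[k] ρ a - Δ (ρ a) ∈ corel k A C) ∧
        (∀ a : A, ε (ρ a) = a))) ∧
    (∀ g : C, (Δ g - g ⊗ₜ[k] g ∈ corel k A C ∧ ε g = 1) →
      ((∀ a b : A, ((rAct k A C).flip g) (a * b) = op b • ((rAct k A C).flip g) a) ∧
       (∀ a : A, ((rAct k A C).flip g) 1 ⊗ₜ[k] ((rAct k A C).flip g) a -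
          Δ (((rAct k A C).flip g) a) ∈ corel k A C) ∧
       (∀ a : A, ε (((rAct k A C).flip g) a) = a))) ∧
    (∀ ρ : A →ₗ[k] C,
      ((∀ a b : A, ρ (a * b) = op b • ρ a) ∧
       (∀ a : A, ρ 1 ⊗ₜ[k] ρ a - Δ (ρ a) ∈ corel k A C) ∧
       (∀ a : A, ε (ρ a) = a)) →
      (Δ (ρ 1) - ρ 1 ⊗ₜ[k] ρ 1 ∈ corel k A C ∧ ε (ρ 1) = 1)) := by
  have stab : ∀ (a : A) (x : C ⊗[k] C), x ∈ corel k A C →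
      lTensor C (rAct k A C a) x ∈ corel k A C := by
    intro a x hx
    induction hx using Submodule.span_induction with
    | mem y hy =>
      obtain ⟨c, c', b, rfl⟩ := hy
      apply Submodule.subset_span
      refine ⟨c, op a • c', b, ?_⟩
      rw [map_sub]
      simp only [lTensor_tmul, rAct, mk₂_apply]
      rw [smul_comm b (op a) c']
    | zero => simp
    | add x y _ _ hx hy => rw [map_add]; exact Submodule.add_mem _ hx hy
    | smul t x _ hx => rw [map_smul]; exact Submodule.smul_mem _ _ hx
  have part2 : ∀ g : C, (Δ g - g ⊗ₜ[k] g ∈ corel k A C ∧ ε g = 1) →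
      ((∀ a b : A, ((rAct k A C).flip g) (a * b) = op b • ((rAct k A C).flip g) a) ∧
       (∀ a : A, ((rAct k A C).flip g) 1 ⊗ₜ[k] ((rAct k A C).flip g) a -
          Δ (((rAct k A C).flip g) a) ∈ corel k A C) ∧
       (∀ a : A, ε (((rAct k A C).flip g) a) = a)) := by
    rintro g ⟨hg1, hg2⟩
    refine ⟨?_, ?_, ?_⟩
    · intro a b
      simp only [flip_apply, rAct, mk₂_apply, op_mul, mul_smul]
    · intro a
      have h1 := hΔr a g
      have h2 := stab a _ (Submodule.neg_mem _ hg1)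
      have h3 := Submodule.add_mem _ h2 (Submodule.neg_mem _ h1)
      convert h3 using 1
      simp only [flip_apply, rAct, mk₂_apply, map_neg, map_sub, lTensor_tmul, op_one, one_smul]
      abel
    · intro a
      simp only [flip_apply, rAct, mk₂_apply, hεr, hg2, one_mul]
  have part3 : ∀ ρ : A →ₗ[k] C,
      ((∀ a b : A, ρ (a * b) = op b • ρ a) ∧
       (∀ a : A, ρ 1 ⊗ₜ[k] ρ a - Δ (ρ a) ∈ corel k A C) ∧
       (∀ a : A, ε (ρ a) = a)) →
      (Δ (ρ 1) - ρ 1 ⊗ₜ[k] ρ 1 ∈ corel k A C ∧ ε (ρ 1) = 1) := by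
    rintro ρ ⟨h1, h2, h3⟩
    refine ⟨?_, h3 1⟩
    have := Submodule.neg_mem _ (h2 1)
    rwa [neg_sub] at this
  refine ⟨⟨?_, ?_⟩, part2, part3⟩
  · rintro ⟨g, hg⟩
    exact ⟨(rAct k A C).flip g, part2 g hg⟩
  · rintro ⟨ρ, hρ⟩
    exact ⟨ρ 1, part3 ρ hρ⟩
end

section
/- Let H be a Hopf algebra over a field k with bijective antipode S. The map ψ : H ⊗ H → H ⊗ H, ψ(c ⊗ a) = a₍₂₎ ⊗ S⁻¹(a₍₁₎) c a₍₃₎, satisfies the left pentagon condition of the bow-tie diagram: ψ ∘ (id_H ⊗ μ) = (μ ⊗ id_H) ∘ (id_H ⊗ ψ) ∘ (ψ ⊗ id_H) as maps H ⊗ H ⊗ H → H ⊗ H. -/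
open TensorProduct LinearMap

variable (k H : Type) [Field k] [Ring H] [HopfAlgebra k H]

/-- The map `(c ⊗ z) ⊗ x ↦ x * c * z`. -/
noncomputable def m3 : (H ⊗[k] H) ⊗[k] H →ₗ[k] H :=
  LinearMap.mul' k H ∘ₗ (TensorProduct.comm k H H).toLinearMap ∘ₗ
    rTensor H (LinearMap.mul' k H)

/-- The iterated comultiplication `a ↦ a₍₁₎ ⊗ (a₍₂₎ ⊗ a₍₃₎)`. -/
noncomputable def D2 : H →ₗ[k] H ⊗[k] (H ⊗[k] H) :=
  lTensor H (Coalgebra.comul (R := k)) ∘ₗ Coalgebra.comul (R := k)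

/-- The anti-Yetter–Drinfeld entwining map
`ψ(c ⊗ a) = a₍₂₎ ⊗ S⁻¹(a₍₁₎) * c * a₍₃₎`, where `S'` is the (given) inverse of the
antipode. -/
noncomputable def psi (S' : H →ₗ[k] H) : H ⊗[k] H →ₗ[k] H ⊗[k] H :=
  lTensor H (m3 k H)
    ∘ₗ (TensorProduct.assoc k H (H ⊗[k] H) H).toLinearMap
    ∘ₗ (TensorProduct.comm k H (H ⊗[k] (H ⊗[k] H))).toLinearMap
    ∘ₗ lTensor H (lTensor H (TensorProduct.comm k H H).toLinearMap)
    ∘ₗ lTensor H (TensorProduct.assoc k H H H).toLinearMap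
    ∘ₗ (TensorProduct.assoc k H (H ⊗[k] H) H).toLinearMap
    ∘ₗ rTensor H (rTensor (H ⊗[k] H) S' ∘ₗ D2 k H)
    ∘ₗ (TensorProduct.comm k H H).toLinearMap


section Aux
open Coalgebra
noncomputable def conv {C : Type} [AddCommGroup C] [Module k C] [CoalgebraStruct k C]
    (f g : C →ₗ[k] H) : C →ₗ[k] H :=
  LinearMap.mul' k H ∘ₗ TensorProduct.map f g ∘ₗ Coalgebra.comul

noncomputable def cunit (C : Type) [AddCommGroup C] [Module k C] [CoalgebraStruct k C] :
    C →ₗ[k] H :=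
  Algebra.linearMap k H ∘ₗ Coalgebra.counit

section Conv
variable {C : Type} [AddCommGroup C] [Module k C] [Coalgebra k C]

lemma conv_assoc (f g h : C →ₗ[k] H) :
    conv k H (conv k H f g) h = conv k H f (conv k H g h) := by
  unfold conv
  have e1 : TensorProduct.map ((mul' k H ∘ₗ TensorProduct.map f g) ∘ₗ comul) (h ∘ₗ .id) =
      TensorProduct.map (mul' k H ∘ₗ TensorProduct.map f g) h ∘ₗ rTensor C comul :=
    TensorProduct.map_comp _ _ _ _
  have e2 : TensorProduct.map (f ∘ₗ .id) ((mul' k H ∘ₗ TensorProduct.map g h) ∘ₗ comul) =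
      TensorProduct.map f (mul' k H ∘ₗ TensorProduct.map g h) ∘ₗ lTensor C comul :=
    TensorProduct.map_comp _ _ _ _
  simp only [comp_id] at e1 e2
  rw [show (mul' k H ∘ₗ TensorProduct.map f g ∘ₗ comul) =
      (mul' k H ∘ₗ TensorProduct.map f g) ∘ₗ comul from rfl, e1,
    show (mul' k H ∘ₗ TensorProduct.map g h ∘ₗ comul) =
      (mul' k H ∘ₗ TensorProduct.map g h) ∘ₗ comul from rfl, e2]
  have coas : lTensor C (comul (R := k)) ∘ₗ comul =
      (TensorProduct.assoc k C C C).toLinearMap ∘ₗ rTensor C comul ∘ₗ comul :=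
    (Coalgebra.coassoc (R := k)).symm
  rw [comp_assoc, comp_assoc, coas]
  have key : mul' k H ∘ₗ TensorProduct.map (mul' k H ∘ₗ TensorProduct.map f g) h =
      (mul' k H ∘ₗ TensorProduct.map f (mul' k H ∘ₗ TensorProduct.map g h)) ∘ₗ
        (TensorProduct.assoc k C C C).toLinearMap := by
    apply TensorProduct.ext_threefold
    intro x y z
    simp [mul_assoc]
  rw [← comp_assoc comul, ← comp_assoc, ← comp_assoc, key]
  simp only [comp_assoc]

lemma cunit_conv (f : C →ₗ[k] H) : conv k H (cunit k H C) f = f := by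
  unfold conv cunit
  rw [← LinearMap.map_comp_rTensor (f := Algebra.linearMap k H) (g := f) (f' := counit),
    comp_assoc, Coalgebra.rTensor_counit_comp_comul]
  ext c
  simp [Algebra.smul_def]

lemma conv_cunit (f : C →ₗ[k] H) : conv k H f (cunit k H C) = f := by
  unfold conv cunit
  rw [← LinearMap.map_comp_lTensor (f := f) (g := Algebra.linearMap k H) (g' := counit),
    comp_assoc, Coalgebra.lTensor_counit_comp_comul]
  ext c
  simp [Algebra.smul_def, Algebra.commutes]

lemma conv_comp {D : Type} [AddCommGroup D] [Module k D] [Coalgebra k D]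
    (p : C →ₗ[k] D) (h1 : comul ∘ₗ p = TensorProduct.map p p ∘ₗ comul)
    (f g : D →ₗ[k] H) :
    conv k H (f ∘ₗ p) (g ∘ₗ p) = conv k H f g ∘ₗ p := by
  unfold conv
  rw [TensorProduct.map_comp, comp_assoc, comp_assoc, ← h1]
  simp only [comp_assoc]

end Conv

lemma map_mul_tttComm (t s : H ⊗[k] H) :
    TensorProduct.map (LinearMap.mul' k H) (LinearMap.mul' k H)
      (TensorProduct.tensorTensorTensorComm k H H H H (t ⊗ₜ[k] s)) = t * s := by
  induction t using TensorProduct.induction_on with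
  | zero => simp
  | add t1 t2 h1 h2 => simp only [TensorProduct.add_tmul, map_add, h1, h2, add_mul]
  | tmul x y =>
    induction s using TensorProduct.induction_on with
    | zero => simp
    | add s1 s2 h1 h2 => simp only [TensorProduct.tmul_add, map_add, h1, h2, mul_add]
    | tmul u v => simp [Algebra.TensorProduct.tmul_mul_tmul]

lemma comul_comp_mul :
    (Coalgebra.comul (R := k)) ∘ₗ LinearMap.mul' k H =
      TensorProduct.map (LinearMap.mul' k H) (LinearMap.mul' k H) ∘ₗ
        (Coalgebra.comul (R := k) (A := H ⊗[k] H)) := by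
  apply TensorProduct.ext'
  intro a b
  simp [map_mul_tttComm, AlgebraTensorModule.tensorTensorTensorComm_eq]

lemma counit_comp_mul :
    (Coalgebra.counit (R := k)) ∘ₗ LinearMap.mul' k H =
      (Coalgebra.counit (R := k) (A := H ⊗[k] H)) := by
  apply TensorProduct.ext'
  intro a b
  simp [mul_comm]

/-- The "opposite composed antipode" `a ⊗ b ↦ S b * S a`. -/
noncomputable def Gmap : H ⊗[k] H →ₗ[k] H :=
  LinearMap.mul' k H ∘ₗ
    TensorProduct.map (HopfAlgebra.antipode (R := k)) (HopfAlgebra.antipode (R := k)) ∘ₗ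
    (TensorProduct.comm k H H).toLinearMap

@[simp] lemma Gmap_tmul (a b : H) :
    Gmap k H (a ⊗ₜ[k] b) =
      HopfAlgebra.antipode (R := k) b * HopfAlgebra.antipode (R := k) a := by
  simp [Gmap]

/-- `h ⊗ (u ⊗ v) ↦ S u * h * v`. -/
noncomputable def Xi : H ⊗[k] (H ⊗[k] H) →ₗ[k] H :=
  LinearMap.mul' k H ∘ₗ
    TensorProduct.map (HopfAlgebra.antipode (R := k)) (LinearMap.mul' k H) ∘ₗ
    (TensorProduct.assoc k H H H).toLinearMap ∘ₗ
    rTensor H (TensorProduct.comm k H H).toLinearMap ∘ₗ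
    (TensorProduct.assoc k H H H).symm.toLinearMap

@[simp] lemma Xi_tmul (h u v : H) :
    Xi k H (h ⊗ₜ[k] (u ⊗ₜ[k] v)) =
      HopfAlgebra.antipode (R := k) u * (h * v) := by
  simp [Xi]

lemma aux2 (t s : H ⊗[k] H) :
    LinearMap.mul' k H (TensorProduct.map (Gmap k H) (LinearMap.mul' k H)
      (TensorProduct.tensorTensorTensorComm k H H H H (t ⊗ₜ[k] s))) =
    Xi k H ((LinearMap.mul' k H (rTensor H (HopfAlgebra.antipode (R := k)) t)) ⊗ₜ[k] s) := by
  induction t using TensorProduct.induction_on with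
  | zero => simp
  | add t1 t2 h1 h2 => simp only [TensorProduct.add_tmul, map_add, h1, h2]
  | tmul x y =>
    induction s using TensorProduct.induction_on with
    | zero => simp
    | add s1 s2 h1 h2 => simp only [TensorProduct.tmul_add, map_add, h1, h2]
    | tmul u v => simp [mul_assoc]

lemma aux3 (s : H ⊗[k] H) :
    Xi k H ((1 : H) ⊗ₜ[k] s) =
      LinearMap.mul' k H (rTensor H (HopfAlgebra.antipode (R := k)) s) := by
  induction s using TensorProduct.induction_on with
  | zero => simp
  | add s1 s2 h1 h2 => simp only [TensorProduct.tmul_add, map_add, h1, h2]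
  | tmul u v => simp

lemma conv_G_mul : conv k H (Gmap k H) (LinearMap.mul' k H) = cunit k H (H ⊗[k] H) := by
  apply TensorProduct.ext'
  intro a b
  simp only [conv, cunit, coe_comp, Function.comp_apply,
    TensorProduct.comul_tmul, TensorProduct.counit_tmul, AlgebraTensorModule.tensorTensorTensorComm_eq,
    TensorProduct.map_tmul, mul'_apply, LinearEquiv.coe_coe]
  rw [aux2]
  rw [HopfAlgebra.mul_antipode_rTensor_comul_apply]
  rw [Algebra.algebraMap_eq_smul_one, ← TensorProduct.smul_tmul', map_smul, aux3,
    HopfAlgebra.mul_antipode_rTensor_comul_apply]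
  simp [Algebra.smul_def]
  exact Algebra.commutes _ _

lemma conv_mul_Smul :
    conv k H (LinearMap.mul' k H)
      ((HopfAlgebra.antipode (R := k)) ∘ₗ LinearMap.mul' k H) = cunit k H (H ⊗[k] H) := by
  have := conv_comp k H (C := H ⊗[k] H) (D := H) (LinearMap.mul' k H)
    (comul_comp_mul k H) LinearMap.id (HopfAlgebra.antipode (R := k))
  rw [id_comp] at this
  rw [this]
  have : conv k H LinearMap.id (HopfAlgebra.antipode (R := k)) = cunit k H H := by
    unfold conv cunit
    exact HopfAlgebra.mul_antipode_lTensor_comul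
  rw [this]
  unfold cunit
  rw [comp_assoc, counit_comp_mul]

lemma antipode_comp_mul :
    (HopfAlgebra.antipode (R := k)) ∘ₗ LinearMap.mul' k H = Gmap k H := by
  have h1 := cunit_conv k H ((HopfAlgebra.antipode (R := k)) ∘ₗ LinearMap.mul' k H)
  rw [← conv_G_mul k H] at h1
  rw [conv_assoc, conv_mul_Smul, conv_cunit] at h1
  exact h1.symm

lemma antipode_mul (a b : H) :
    HopfAlgebra.antipode (R := k) (a * b) =
      HopfAlgebra.antipode (R := k) b * HopfAlgebra.antipode (R := k) a := by
  have := LinearMap.congr_fun (antipode_comp_mul k H) (a ⊗ₜ[k] b)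
  simpa using this

lemma antipodeInv_mul (S' : H →ₗ[k] H)
    (hS1 : S' ∘ₗ (HopfAlgebra.antipode k : H →ₗ[k] H) = LinearMap.id)
    (hS2 : (HopfAlgebra.antipode k : H →ₗ[k] H) ∘ₗ S' = LinearMap.id)
    (x y : H) : S' (x * y) = S' y * S' x := by
  have h2x : HopfAlgebra.antipode (R := k) (S' x) = x := LinearMap.congr_fun hS2 x
  have h2y : HopfAlgebra.antipode (R := k) (S' y) = y := LinearMap.congr_fun hS2 y
  have : x * y = HopfAlgebra.antipode (R := k) (S' y * S' x) := by
    rw [antipode_mul, h2x, h2y]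
  rw [this]
  exact LinearMap.congr_fun hS1 (S' y * S' x)

lemma lTensor_comul_mul (t s : H ⊗[k] H) :
    lTensor H (Coalgebra.comul (R := k)) (t * s) =
      lTensor H (Coalgebra.comul (R := k)) t * lTensor H (Coalgebra.comul (R := k)) s := by
  induction t using TensorProduct.induction_on with
  | zero => simp
  | add t1 t2 h1 h2 => simp only [add_mul, map_add, h1, h2]
  | tmul x y =>
    induction s using TensorProduct.induction_on with
    | zero => simp
    | add s1 s2 h1 h2 => simp only [mul_add, map_add, h1, h2]
    | tmul u v => simp [Algebra.TensorProduct.tmul_mul_tmul]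

end Aux

lemma D2_mul (a b : H) : D2 k H (a * b) = D2 k H a * D2 k H b := by
  simp [D2, lTensor_comul_mul]

set_option synthInstance.maxHeartbeats 1000000 in
set_option maxHeartbeats 2000000 in
/-- **Left pentagon of the bow-tie diagram for the anti-Yetter–Drinfeld entwining.**
For a Hopf algebra `H` with bijective antipode `S` (with inverse `S'`), the map
`ψ(c ⊗ a) = a₍₂₎ ⊗ S⁻¹(a₍₁₎) c a₍₃₎` satisfies
`ψ ∘ (id ⊗ μ) = (μ ⊗ id) ∘ (id ⊗ ψ) ∘ (ψ ⊗ id)` as maps `H ⊗ H ⊗ H → H ⊗ H`. -/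
theorem aYD_entwining_left_pentagon
    (S' : H →ₗ[k] H)
    (hS1 : S' ∘ₗ (HopfAlgebra.antipode k : H →ₗ[k] H) = LinearMap.id)
    (hS2 : (HopfAlgebra.antipode k : H →ₗ[k] H) ∘ₗ S' = LinearMap.id) :
    psi k H S' ∘ₗ lTensor H (LinearMap.mul' k H)
        ∘ₗ (TensorProduct.assoc k H H H).toLinearMap =
      rTensor H (LinearMap.mul' k H)
        ∘ₗ (TensorProduct.assoc k H H H).symm.toLinearMap
        ∘ₗ lTensor H (psi k H S')
        ∘ₗ (TensorProduct.assoc k H H H).toLinearMap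
        ∘ₗ rTensor H (psi k H S') := by
  apply TensorProduct.ext_threefold
  intro c a b
  simp only [psi, coe_comp, Function.comp_apply, LinearEquiv.coe_coe,
    TensorProduct.assoc_tmul, TensorProduct.assoc_symm_tmul, TensorProduct.comm_tmul,
    lTensor_tmul, rTensor_tmul, mul'_apply]
  rw [D2_mul]
  generalize D2 k H a = t
  induction t using TensorProduct.induction_on with
  | zero => simp only [zero_mul, map_zero, TensorProduct.zero_tmul, TensorProduct.tmul_zero]
  | add t1 t2 h1 h2 =>
    simp only [add_mul, map_add, TensorProduct.add_tmul, TensorProduct.tmul_add, h1, h2]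
  | tmul x m =>
    induction m using TensorProduct.induction_on with
    | zero =>
      simp only [TensorProduct.tmul_zero, zero_mul, map_zero, TensorProduct.zero_tmul]
    | add m1 m2 h1 h2 =>
      simp only [TensorProduct.tmul_add, TensorProduct.add_tmul, add_mul, map_add, h1, h2]
    | tmul y z =>
      simp only [coe_comp, Function.comp_apply, LinearEquiv.coe_coe,
        TensorProduct.assoc_tmul, TensorProduct.assoc_symm_tmul, TensorProduct.comm_tmul,
        lTensor_tmul, rTensor_tmul, mul'_apply, m3]
      generalize D2 k H b = s
      induction s using TensorProduct.induction_on with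
      | zero =>
        simp only [mul_zero, map_zero, TensorProduct.zero_tmul, TensorProduct.tmul_zero]
      | add s1 s2 h1 h2 =>
        simp only [mul_add, map_add, TensorProduct.add_tmul, TensorProduct.tmul_add, h1, h2]
      | tmul u n =>
        induction n using TensorProduct.induction_on with
        | zero =>
          simp only [TensorProduct.tmul_zero, mul_zero, map_zero, TensorProduct.zero_tmul]
        | add n1 n2 h1 h2 =>
          simp only [TensorProduct.tmul_add, TensorProduct.add_tmul, mul_add, map_add, h1, h2]
        | tmul v w =>
          simp only [Algebra.TensorProduct.tmul_mul_tmul, coe_comp, Function.comp_apply,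
            LinearEquiv.coe_coe, TensorProduct.assoc_tmul, TensorProduct.assoc_symm_tmul,
            TensorProduct.comm_tmul, lTensor_tmul, rTensor_tmul, mul'_apply, m3]
          rw [antipodeInv_mul k H S' hS1 hS2]
          simp only [mul_assoc]
end
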